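/- Let φ : Γ → Λ be a homomorphism of groups, Γ' ≤ Γ and Λ' ≤ Λ subgroups with φ(Γ') ⊆ Λ', and let φ' : Γ' → Λ' be the restriction of φ. Suppose there are group homomorphisms r_Γ : Γ → Γ' and r_Λ : Λ → Λ' that restrict to the identity on Γ' and Λ' respectively, and satisfy φ' ∘ r_Γ = r_Λ ∘ φ (i.e. φ' is a retraction homomorphism of φ). Then for every natural number k, if there exists a ℤΛ'-module M such that φ'^* : H^k(Λ'; M) → H^k(Γ'; M) is nonzero, then the induced map φ^* : H^k(Λ; M) → H^k(Γ; M) is nonzero, where M is regarded as a ℤΛ-module via r_Λ. (In particular cd(φ) ≥ cd(φ').) -/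

import Mathlib

open CategoryTheory

/-- Restriction of a representation along a group homomorphism `f : G →* H`: the same module,
with `G` acting via `f`. -/
noncomputable def resRep {k G H : Type} [CommRing k] [Group G] [Group H] (f : G →* H)
    (A : Rep.{0} k H) : Rep.{0} k G :=
  Rep.res f A

/-- The map of inhomogeneous cochain complexes induced by a group homomorphism `f : G →* H`,
given in degree `n` by precomposition `c ↦ c ∘ (f ∘ ·)`. -/
noncomputable def cochainsMap {k G H : Type} [CommRing k] [Group G] [Group H] (f : G →* H)
    (A : Rep k H) :
    groupCohomology.inhomogeneousCochains A ⟶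
      groupCohomology.inhomogeneousCochains (resRep f A) where
  f n := show ModuleCat.of k ((Fin n → H) → A) ⟶ ModuleCat.of k ((Fin n → G) → A) from
    ModuleCat.ofHom (LinearMap.funLeft k A fun (g : Fin n → G) => f ∘ g)
  comm' i j hij := by
    subst hij
    simp only [CochainComplex.of_d]
    ext (x : (Fin i → H) → A)
    rename_i g
    show (inhomogeneousCochains.d (resRep f A) i).hom (fun p => x (f ∘ p)) g
      = (inhomogeneousCochains.d A i).hom x (f ∘ g)
    erw [inhomogeneousCochains.d_hom_apply, inhomogeneousCochains.d_hom_apply]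
    congr 1
    refine Finset.sum_congr rfl fun j _ => ?_
    have : (⇑f ∘ Fin.contractNth j (· * ·) g) = Fin.contractNth j (· * ·) (⇑f ∘ g) := by
      funext p
      simp only [Function.comp, Fin.contractNth]
      split_ifs <;> simp [map_mul]
    rw [this]
    rfl

/-- The induced map `f^* : H^n(H; A) → H^n(G; res_f A)` on group cohomology. -/
noncomputable def cohomologyMap {k G H : Type} [CommRing k] [Group G] [Group H] (f : G →* H)
    (A : Rep k H) (n : ℕ) : groupCohomology A n ⟶ groupCohomology (resRep f A) n :=
  HomologicalComplex.homologyMap (cochainsMap f A) n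


lemma resRep_comp {k G H K : Type} [CommRing k] [Group G] [Group H] [Group K]
    (f : G →* H) (g : K →* G) (A : Rep k H) :
    resRep g (resRep f A) = resRep (f.comp g) A := rfl

lemma cochainsMap_comp {k G H K : Type} [CommRing k] [Group G] [Group H] [Group K]
    (f : G →* H) (g : K →* G) (A : Rep k H) :
    cochainsMap (f.comp g) A = cochainsMap f A ≫ cochainsMap g (resRep f A) := rfl

/-- Let `φ' : Γ' → Λ'` be the restriction of `φ : Γ → Λ` to subgroups, and
suppose there are retraction homomorphisms `rΓ : Γ →* Γ'`, `rΛ : Λ →* Λ'` (restricting to the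
identity on `Γ'`, `Λ'`) with `φ' ∘ rΓ = rΛ ∘ φ`.  If `φ'^* : H^k(Λ'; M) → H^k(Γ'; M)` is
nonzero for some `ℤΛ'`-module `M`, then `φ^* : H^k(Λ; M) → H^k(Γ; M)` is nonzero, where `M`
is regarded as a `ℤΛ`-module via `rΛ`.  (In particular `cd(φ) ≥ cd(φ')`.) -/
theorem stmt1 {Γ Λ : Type} [Group Γ] [Group Λ] (φ : Γ →* Λ)
    (Γ' : Subgroup Γ) (Λ' : Subgroup Λ) (hφ : ∀ x : Γ', φ ↑x ∈ Λ')
    (rΓ : Γ →* Γ') (rΛ : Λ →* Λ')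
    (hrΓ : ∀ x : Γ', rΓ ↑x = x) (hrΛ : ∀ y : Λ', rΛ ↑y = y)
    (hcomm : ∀ g : Γ, ((φ.domRestrict Γ').codRestrict Λ' hφ) (rΓ g) = rΛ (φ g))
    (k : ℕ) (M : Rep ℤ Λ')
    (hM : cohomologyMap ((φ.domRestrict Γ').codRestrict Λ' hφ) M k ≠ 0) :
    cohomologyMap φ (resRep rΛ M) k ≠ 0 := by
  intro h0
  apply hM
  have hψ : ((rΛ.comp φ).comp Γ'.subtype) = ((φ.domRestrict Γ').codRestrict Λ' hφ) := by
    ext x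
    have h1 := hcomm (x : Γ)
    rw [hrΓ x] at h1
    exact congrArg Subtype.val h1.symm
  rw [← hψ] at hM ⊢
  show HomologicalComplex.homologyMap _ k = 0
  rw [cochainsMap_comp, cochainsMap_comp]
  erw [HomologicalComplex.homologyMap_comp,
    HomologicalComplex.homologyMap_comp]
  have : HomologicalComplex.homologyMap (cochainsMap φ (resRep rΛ M)) k = 0 := h0
  erw [this]
  erw [Limits.comp_zero, Limits.zero_comp]
  rfl
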